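/- Let p > 1, C₀ > 0, R₁ > 1, set κ = 1/(p−1), and let η, ψ_R, ψ*_R, P(R) be as in the context, with p' = p/(p-1). There exist constants C > 0 and δ₀ ∈ (0,1), depending only on p, C₀, R₁ and η, with the following property: if δ ∈ (0,δ₀], T > R₁, and w : Ω × [0,T) → [0,∞) is measurable, integrable on P(R) for every R ∈ (0,T), and satisfies δ + ∬_{P(R)} w(x,t) ψ_R(x,t) dx dt ≤ C₀ (log R)^{κ/p'} ( ∬_{P(R)} w(x,t) ψ*_R(x,t) dx dt )^{1/p} for every R ∈ [R₁,T), then T ≤ exp( exp( C δ^{−(p−1)} ) ). -/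

import Mathlib

open MeasureTheory Real Set

noncomputable section

/-- The plane `ℝ²` with the Euclidean norm. -/
abbrev E2 := EuclideanSpace ℝ (Fin 2)

/-- The exterior domain `Ω = {x ∈ ℝ² : |x| > 1}`. -/
def Omega : Set E2 := {x : E2 | 1 < ‖x‖}

/-- `η` is of class `C²` on `[0,∞)`, equals `1` on `[0,1/2]`, is nonincreasing on `[1/2,1]`
and vanishes on `[1,∞)`. -/
def etaOK (η : ℝ → ℝ) : Prop :=
  ContDiffOn ℝ 2 η (Set.Ici 0) ∧
  (∀ s ∈ Set.Icc (0 : ℝ) (1 / 2), η s = 1) ∧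
  AntitoneOn η (Set.Icc (1 / 2 : ℝ) 1) ∧
  (∀ s : ℝ, 1 ≤ s → η s = 0)

/-- `η*(s) = 0` for `s < 1/2` and `η*(s) = η(s)` for `s ≥ 1/2`. -/
def etaStar (η : ℝ → ℝ) (s : ℝ) : ℝ := if s < 1 / 2 then 0 else η s

/-- `ψ_R(x,t) = [η(((|x|-1)² + t)/R)]^{2p'}` with `p' = p/(p-1)`. -/
def psi (η : ℝ → ℝ) (p R : ℝ) (x : E2) (t : ℝ) : ℝ :=
  η (((‖x‖ - 1) ^ 2 + t) / R) ^ (2 * (p / (p - 1)))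

/-- `ψ*_R(x,t) = [η*(((|x|-1)² + t)/R)]^{2p'}` with `p' = p/(p-1)`. -/
def psiStar (η : ℝ → ℝ) (p R : ℝ) (x : E2) (t : ℝ) : ℝ :=
  etaStar η (((‖x‖ - 1) ^ 2 + t) / R) ^ (2 * (p / (p - 1)))

/-- `P(R) = {(x,t) ∈ Ω × [0,∞) : (|x|-1)² + t ≤ R}`. -/
def Pset (R : ℝ) : Set (E2 × ℝ) :=
  {q : E2 × ℝ | q.1 ∈ Omega ∧ 0 ≤ q.2 ∧ (‖q.1‖ - 1) ^ 2 + q.2 ≤ R}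

/-- The Laplacian in the `x`-variables: the sum of the two second partial derivatives. -/
def lapx {F : Type*} [NormedAddCommGroup F] [NormedSpace ℝ F] (f : E2 → F) (x : E2) : F :=
  ∑ i : Fin 2, iteratedDeriv 2 (fun s : ℝ => f (x + s • EuclideanSpace.single i (1 : ℝ))) 0


/-!
With `J(R) = ∬_{P(R)} w ψ_R` and `I(R) = ∬_{P(R)} w ψ*_R`, the cutoffs `ψ_R` and `ψ*_{2R}` live on
the disjoint ranges `s < R` and `s ≥ R` of `s = (|x|-1)² + t` and both lie below `ψ_{2R}`, so
`J(R) + I(2R) ≤ J(2R)`. The criterion at `2R` then gives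
`(δ + J(2R))^p ≤ C₀^p log(2R) (J(2R) - J(R))`, and convexity of `z ↦ z^{1-p}` turns this into a
decrease of `u(R) = (δ + J(R))^{1-p}` by at least `(p-1)/(C₀^p log 2R)`. Summing over the dyadic
radii `2^k R₁ < T`, a harmonic sum of size `log N` is bounded by `u(R₁) ≤ δ^{1-p}`; hence the number
`N ≈ log T` of dyadic scales is at most exponential in `δ^{1-p}`.
-/

lemma mul_sub_mul_rpow_le_rpow_neg_sub_rpow_neg {β z z' : ℝ} (hβ : 0 < β) (hz : 0 < z)
    (hzz' : z ≤ z') : β * (z' - z) * z' ^ (-β - 1) ≤ z ^ (-β) - z' ^ (-β) := by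
  have hz' : 0 < z' := hz.trans_le hzz'
  set r := z / z'
  have hr : 0 < r := div_pos hz hz'
  -- `r ^ (-β) = exp (-β log r) ≥ 1 - β log r ≥ 1 + β (1 - r)`
  have hbernoulli : 1 + β * (1 - r) ≤ r ^ (-β) := by
    rw [rpow_def_of_pos hr]
    nlinarith [add_one_le_exp (log r * -β), log_le_sub_one_of_pos hr]
  have hz_eq : z = r * z' := (div_mul_cancel₀ z hz'.ne').symm
  have hpow : z' ^ (-β - 1) = z' ^ (-β) * z'⁻¹ := by
    rw [rpow_sub hz', rpow_one, div_eq_mul_inv]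
  calc β * (z' - z) * z' ^ (-β - 1) = β * (1 - r) * z' ^ (-β) := by
        rw [hpow, hz_eq]; field_simp
    _ ≤ (r ^ (-β) - 1) * z' ^ (-β) := by gcongr; linarith
    _ = z ^ (-β) - z' ^ (-β) := by rw [hz_eq, mul_rpow hr.le hz'.le]; ring

lemma div_le_rpow_one_sub_sub_rpow_one_sub {p K z z' : ℝ} (hp : 1 < p) (hK : 0 < K)
    (hz : 0 < z) (hzz' : z ≤ z') (h : z' ^ p ≤ K * (z' - z)) :
    (p - 1) / K ≤ z ^ (1 - p) - z' ^ (1 - p) := by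
  have hz' : 0 < z' := hz.trans_le hzz'
  have hgap : 1 / K ≤ (z' - z) * z' ^ (-p) := by
    rw [rpow_neg hz'.le, ← div_eq_mul_inv, div_le_div_iff₀ hK (rpow_pos_of_pos hz' p)]
    linarith
  have hconv := mul_sub_mul_rpow_le_rpow_neg_sub_rpow_neg (sub_pos.mpr hp) hz hzz'
  rw [neg_sub, show 1 - p - 1 = -p by ring] at hconv
  calc (p - 1) / K = (p - 1) * (1 / K) := by ring
    _ ≤ (p - 1) * ((z' - z) * z' ^ (-p)) := by gcongr
    _ ≤ z ^ (1 - p) - z' ^ (1 - p) := by linarith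

lemma rpow_le_of_le_mul_rpow_one_div {p C L i x : ℝ} (hp : 0 < p) (hC : 0 ≤ C) (hL : 0 ≤ L)
    (hi : 0 ≤ i) (hx : 0 ≤ x) (h : x ≤ C * L ^ (1 / p) * i ^ (1 / p)) :
    x ^ p ≤ C ^ p * L * i := by
  have hcancel : ∀ y : ℝ, 0 ≤ y → (y ^ (1 / p)) ^ p = y := fun y hy => by
    rw [← rpow_mul hy, one_div_mul_cancel hp.ne', rpow_one]
  calc x ^ p ≤ (C * L ^ (1 / p) * i ^ (1 / p)) ^ p := rpow_le_rpow hx h hp.le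
    _ = C ^ p * L * i := by
      rw [mul_rpow (by positivity) (by positivity), mul_rpow hC (by positivity), hcancel L hL,
        hcancel i hi]

lemma mul_log_succ_le_sub_of_div_succ_le {u : ℕ → ℝ} {a : ℝ} (ha : 0 ≤ a) {N : ℕ}
    (h : ∀ k < N, a / (k + 1) ≤ u k - u (k + 1)) : a * log (N + 1) ≤ u 0 - u N := by
  calc a * log (N + 1) ≤ a * harmonic N := by
        gcongr; exact_mod_cast log_add_one_le_harmonic N
    _ = ∑ k ∈ Finset.range N, a / (k + 1) := by
        rw [harmonic]; push_cast; rw [Finset.mul_sum]; simp only [div_eq_mul_inv]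
    _ ≤ ∑ k ∈ Finset.range N, (u k - u (k + 1)) :=
        Finset.sum_le_sum fun k hk => h k (Finset.mem_range.mp hk)
    _ = u 0 - u N := Finset.sum_range_sub' u N

lemma log_two_pow_mul_le {R₁ X : ℝ} (hR₁ : 1 ≤ R₁) {N : ℕ} (hN : (N : ℝ) ≤ X) (hX : 1 ≤ X) :
    log (2 ^ N * R₁) ≤ X * (log 2 + log R₁) := by
  rw [log_mul (by positivity) (by positivity), log_pow]
  have h2 : 0 < log 2 := log_pos one_lt_two
  have hR : 0 ≤ log R₁ := log_nonneg hR₁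
  nlinarith

lemma le_exp_exp_of_forall_two_pow_mul_lt {R₁ T B D : ℝ} (hR₁ : 1 < R₁) (hB : 0 ≤ B)
    (hD : 1 ≤ D) (h : ∀ N : ℕ, 2 ^ N * R₁ < T → log (N + 1) < B * D) :
    T ≤ exp (exp ((B + (log 2 + log R₁)) * D)) := by
  set A := log 2 + log R₁
  have hA : 0 ≤ A := add_nonneg (log_nonneg one_le_two) (log_nonneg hR₁.le)
  set N := ⌊exp (B * D)⌋₊
  have hTN : T ≤ 2 ^ N * R₁ := by
    by_contra! hlt
    have hlog : B * D < log (N + 1) := by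
      rw [lt_log_iff_exp_lt (by positivity)]; exact Nat.lt_floor_add_one _
    linarith [h N hlt]
  have hAD : A ≤ exp (A * D) := by nlinarith [add_one_le_exp (A * D)]
  calc T ≤ 2 ^ N * R₁ := hTN
    _ = exp (log (2 ^ N * R₁)) := (exp_log (by positivity)).symm
    _ ≤ exp (exp ((B + A) * D)) := by
      gcongr
      calc log (2 ^ N * R₁) ≤ exp (B * D) * A :=
            log_two_pow_mul_le hR₁.le (Nat.floor_le (exp_pos _).le) (one_le_exp (by positivity))
        _ ≤ exp (B * D) * exp (A * D) := by gcongr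
        _ = exp ((B + A) * D) := by rw [← exp_add]; ring_nf

section Dyadic

variable {p C₀ R₁ δ T : ℝ} {J I : ℝ → ℝ}

lemma div_log_le_of_criterion (hp : 1 < p) (hC₀ : 0 < C₀) (hR₁ : 1 < R₁) (hδ : 0 < δ)
    (hJ : ∀ R, 0 < R → R < T → 0 ≤ J R) (hI : ∀ R, 0 < R → R < T → 0 ≤ I R)
    (hJI : ∀ R, 0 < R → 2 * R < T → J R + I (2 * R) ≤ J (2 * R))
    (hcrit : ∀ R, R₁ ≤ R → R < T → δ + J R ≤ C₀ * log R ^ (1 / p) * I R ^ (1 / p))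
    {R : ℝ} (hR : R₁ ≤ R) (h2R : 2 * R < T) :
    (p - 1) / (C₀ ^ p * log (2 * R)) ≤ (δ + J R) ^ (1 - p) - (δ + J (2 * R)) ^ (1 - p) := by
  have hR0 : 0 < R := by linarith
  have hJR := hJ R hR0 (by linarith)
  have hI2R := hI (2 * R) (by linarith) h2R
  have hgrowth := hJI R hR0 h2R
  have hlog : 0 < log (2 * R) := log_pos (by linarith)
  refine div_le_rpow_one_sub_sub_rpow_one_sub hp (by positivity) (by linarith) (by linarith) ?_
  calc (δ + J (2 * R)) ^ p ≤ C₀ ^ p * log (2 * R) * I (2 * R) :=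
        rpow_le_of_le_mul_rpow_one_div (by linarith) hC₀.le hlog.le hI2R (by linarith)
          (hcrit _ (by linarith) h2R)
    _ ≤ C₀ ^ p * log (2 * R) * (δ + J (2 * R) - (δ + J R)) := by gcongr; linarith

lemma log_succ_lt_of_criterion (hp : 1 < p) (hC₀ : 0 < C₀) (hR₁ : 1 < R₁) (hδ : 0 < δ)
    (hJ : ∀ R, 0 < R → R < T → 0 ≤ J R) (hI : ∀ R, 0 < R → R < T → 0 ≤ I R)
    (hJI : ∀ R, 0 < R → 2 * R < T → J R + I (2 * R) ≤ J (2 * R))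
    (hcrit : ∀ R, R₁ ≤ R → R < T → δ + J R ≤ C₀ * log R ^ (1 / p) * I R ^ (1 / p))
    {N : ℕ} (hN : 2 ^ N * R₁ < T) :
    log (N + 1) < C₀ ^ p * (log 2 + log R₁) / (p - 1) * δ ^ (1 - p) := by
  set A := log 2 + log R₁
  have hA : 0 < A := add_pos (log_pos one_lt_two) (log_pos hR₁)
  set u : ℕ → ℝ := fun k => (δ + J (2 ^ k * R₁)) ^ (1 - p)
  have hRk : ∀ k : ℕ, R₁ ≤ 2 ^ k * R₁ := fun k => le_mul_of_one_le_left (by linarith)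
    (one_le_pow₀ one_le_two)
  have hRkT : ∀ k ≤ N, 2 ^ k * R₁ < T := fun k hk =>
    lt_of_le_of_lt (by gcongr; exact one_le_two) hN
  have hstep : ∀ k < N, (p - 1) / (C₀ ^ p * A) / (k + 1) ≤ u k - u (k + 1) := by
    intro k hk
    have h2R : 2 * (2 ^ k * R₁) = 2 ^ (k + 1) * R₁ := by ring
    have hdiv := div_log_le_of_criterion hp hC₀ hR₁ hδ hJ hI hJI hcrit (hRk k)
      (h2R ▸ hRkT (k + 1) hk)
    rw [h2R] at hdiv
    refine le_trans ?_ hdiv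
    have hlog : 0 < log (2 ^ (k + 1) * R₁) := log_pos (by linarith [hRk (k + 1)])
    rw [div_div, mul_assoc, mul_comm A]
    gcongr
    exact_mod_cast log_two_pow_mul_le hR₁.le (le_refl ((k + 1 : ℕ) : ℝ)) (by simp)
  have hsum := mul_log_succ_le_sub_of_div_succ_le (by positivity) hstep
  have hu0 : u 0 ≤ δ ^ (1 - p) :=
    rpow_le_rpow_of_nonpos hδ (by linarith [hJ _ (by linarith) (hRkT 0 (Nat.zero_le N))])
      (by linarith)
  have huN : 0 < u N :=
    rpow_pos_of_pos (by linarith [hJ _ (by linarith [hRk N]) hN]) _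
  rw [show C₀ ^ p * A / (p - 1) * δ ^ (1 - p) = δ ^ (1 - p) / ((p - 1) / (C₀ ^ p * A)) by
    field_simp, lt_div_iff₀ (by have := sub_pos.mpr hp; positivity)]
  linarith

end Dyadic

namespace etaOK

variable {η : ℝ → ℝ}

lemma eq_comp_clamp (hη : etaOK η) {s : ℝ} (hs : 0 ≤ s) : η s = η (max (1 / 2) (min s 1)) := by
  obtain ⟨-, h_one, -, h_zero⟩ := hη
  rcases le_or_gt s (1 / 2) with h | h
  · rw [h_one s ⟨hs, h⟩, max_eq_left (min_le_of_left_le h), h_one _ ⟨by norm_num, le_rfl⟩]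
  rcases le_or_gt s 1 with h' | h'
  · rw [min_eq_left h', max_eq_right h.le]
  · rw [h_zero s h'.le, min_eq_right h'.le, max_eq_right (by norm_num), h_zero 1 le_rfl]

lemma antitoneOn (hη : etaOK η) : AntitoneOn η (Ici 0) := by
  intro s hs t ht hst
  rw [hη.eq_comp_clamp hs, hη.eq_comp_clamp ht]
  refine hη.2.2.1 ⟨le_max_left _ _, max_le (by norm_num) (min_le_right _ _)⟩
    ⟨le_max_left _ _, max_le (by norm_num) (min_le_right _ _)⟩ ?_
  gcongr

lemma nonneg (hη : etaOK η) {s : ℝ} (hs : 0 ≤ s) : 0 ≤ η s := by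
  have h := hη.antitoneOn hs (le_trans zero_le_one (le_max_right s 1)) (le_max_left s 1)
  rwa [hη.2.2.2 _ (le_max_right s 1)] at h

lemma le_one (hη : etaOK η) {s : ℝ} (hs : 0 ≤ s) : η s ≤ 1 := by
  have h := hη.antitoneOn (le_refl (0 : ℝ)) hs hs
  rwa [hη.2.1 0 ⟨le_rfl, by norm_num⟩] at h

lemma etaStar_nonneg (hη : etaOK η) {s : ℝ} (hs : 0 ≤ s) : 0 ≤ etaStar η s := by
  unfold etaStar; split_ifs
  exacts [le_rfl, hη.nonneg hs]

lemma etaStar_le (hη : etaOK η) {s : ℝ} (hs : 0 ≤ s) : etaStar η s ≤ η s := by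
  unfold etaStar; split_ifs
  exacts [hη.nonneg hs, le_rfl]

end etaOK

section Cutoff

variable {η : ℝ → ℝ} {p R R' t : ℝ} {x : E2}

lemma two_mul_conjExponent_pos (hp : 1 < p) : 0 < 2 * (p / (p - 1)) := by
  have := sub_pos.mpr hp; positivity

lemma psi_nonneg (hη : etaOK η) (hR : 0 ≤ R) (ht : 0 ≤ t) : 0 ≤ psi η p R x t :=
  rpow_nonneg (hη.nonneg (by positivity)) _

lemma psi_le_one (hη : etaOK η) (hp : 1 < p) (hR : 0 ≤ R) (ht : 0 ≤ t) : psi η p R x t ≤ 1 :=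
  rpow_le_one (hη.nonneg (by positivity)) (hη.le_one (by positivity))
    (two_mul_conjExponent_pos hp).le

lemma psiStar_nonneg (hη : etaOK η) (hR : 0 ≤ R) (ht : 0 ≤ t) : 0 ≤ psiStar η p R x t :=
  rpow_nonneg (hη.etaStar_nonneg (by positivity)) _

lemma psiStar_le_psi (hη : etaOK η) (hp : 1 < p) (hR : 0 ≤ R) (ht : 0 ≤ t) :
    psiStar η p R x t ≤ psi η p R x t :=
  rpow_le_rpow (hη.etaStar_nonneg (by positivity)) (hη.etaStar_le (by positivity))
    (two_mul_conjExponent_pos hp).le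

lemma psi_le_psi (hη : etaOK η) (hp : 1 < p) (hR : 0 < R) (hRR' : R ≤ R') (ht : 0 ≤ t) :
    psi η p R x t ≤ psi η p R' x t := by
  have hR' : 0 < R' := hR.trans_le hRR'
  refine rpow_le_rpow (hη.nonneg (by positivity))
    (hη.antitoneOn (mem_Ici.mpr (by positivity)) (mem_Ici.mpr (by positivity)) ?_)
    (two_mul_conjExponent_pos hp).le
  gcongr

lemma psi_eq_zero (hη : etaOK η) (hp : 1 < p) (hR : 0 < R) (h : R ≤ (‖x‖ - 1) ^ 2 + t) :
    psi η p R x t = 0 := by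
  rw [psi, hη.2.2.2 _ ((one_le_div hR).mpr h), zero_rpow (two_mul_conjExponent_pos hp).ne']

lemma psiStar_eq_zero (hp : 1 < p) (h : ((‖x‖ - 1) ^ 2 + t) / R < 1 / 2) :
    psiStar η p R x t = 0 := by
  rw [psiStar, etaStar, if_pos h, zero_rpow (two_mul_conjExponent_pos hp).ne']

lemma psiStar_two_mul_add_psi_le (hη : etaOK η) (hp : 1 < p) (hR : 0 < R) (ht : 0 ≤ t) :
    psiStar η p (2 * R) x t + psi η p R x t ≤ psi η p (2 * R) x t := by
  by_cases h : (‖x‖ - 1) ^ 2 + t < R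
  · rw [psiStar_eq_zero hp (by rw [div_lt_iff₀ (by positivity)]; linarith), zero_add]
    exact psi_le_psi hη hp hR (by linarith) ht
  · rw [psi_eq_zero hη hp hR (not_lt.mp h), add_zero]
    exact psiStar_le_psi hη hp (by positivity) ht

lemma psiStar_eq_indicator (hp : 1 < p) :
    (fun q : E2 × ℝ => psiStar η p R q.1 q.2) =
      {q : E2 × ℝ | 1 / 2 ≤ ((‖q.1‖ - 1) ^ 2 + q.2) / R}.indicator
        (fun q => psi η p R q.1 q.2) := by
  ext q
  by_cases h : ((‖q.1‖ - 1) ^ 2 + q.2) / R < 1 / 2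
  · rw [psiStar_eq_zero hp h, indicator_of_notMem (by simpa using h)]
  · have h' : q ∈ {q : E2 × ℝ | 1 / 2 ≤ ((‖q.1‖ - 1) ^ 2 + q.2) / R} := not_lt.mp h
    rw [indicator_of_mem h', psiStar, psi, etaStar, if_neg h]

lemma continuousOn_psi (hη : etaOK η) (hp : 1 < p) (hR : 0 ≤ R) :
    ContinuousOn (fun q : E2 × ℝ => psi η p R q.1 q.2) {q | 0 ≤ q.2} := by
  refine (continuous_rpow_const (two_mul_conjExponent_pos hp).le).comp_continuousOn
    (hη.1.continuousOn.comp (Continuous.continuousOn (by fun_prop)) fun q hq => ?_)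
  have hq : 0 ≤ q.2 := hq
  exact mem_Ici.mpr (by positivity)

end Cutoff

section Integrals

variable {η : ℝ → ℝ} {p R S : ℝ} {w : E2 → ℝ → ℝ}

lemma measurableSet_Pset (R : ℝ) : MeasurableSet (Pset R) := by
  have hR : MeasurableSet {q : E2 × ℝ | (‖q.1‖ - 1) ^ 2 + q.2 ≤ R} :=
    measurableSet_le (by fun_prop) measurable_const
  exact (measurableSet_lt measurable_const measurable_fst.norm).inter
    ((measurableSet_le measurable_const measurable_snd).inter hR)

lemma Pset_mono (h : R ≤ S) : Pset R ⊆ Pset S :=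
  fun _ hq => ⟨hq.1, hq.2.1, hq.2.2.trans h⟩

lemma aestronglyMeasurable_psi (hη : etaOK η) (hp : 1 < p) (hR : 0 ≤ R) :
    AEStronglyMeasurable (fun q : E2 × ℝ => psi η p R q.1 q.2) (volume.restrict (Pset S)) :=
  ((continuousOn_psi hη hp hR).mono fun _ hq => hq.2.1).aestronglyMeasurable
    (measurableSet_Pset S)

lemma aestronglyMeasurable_psiStar (hη : etaOK η) (hp : 1 < p) (hR : 0 ≤ R) :
    AEStronglyMeasurable (fun q : E2 × ℝ => psiStar η p R q.1 q.2)
      (volume.restrict (Pset S)) := by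
  rw [psiStar_eq_indicator hp]
  exact (aestronglyMeasurable_psi hη hp hR).indicator
    (measurableSet_le measurable_const (by fun_prop))

lemma integrableOn_mul_psi (hη : etaOK η) (hp : 1 < p) (hR : 0 ≤ R)
    (hw : IntegrableOn (fun q : E2 × ℝ => w q.1 q.2) (Pset S)) :
    IntegrableOn (fun q : E2 × ℝ => w q.1 q.2 * psi η p R q.1 q.2) (Pset S) := by
  refine Integrable.mul_bdd hw (aestronglyMeasurable_psi hη hp hR) (c := 1) ?_
  filter_upwards [ae_restrict_mem (measurableSet_Pset S)] with q hq
  rw [norm_of_nonneg (psi_nonneg hη hR hq.2.1)]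
  exact psi_le_one hη hp hR hq.2.1

lemma integrableOn_mul_psiStar (hη : etaOK η) (hp : 1 < p) (hR : 0 ≤ R)
    (hw : IntegrableOn (fun q : E2 × ℝ => w q.1 q.2) (Pset S)) :
    IntegrableOn (fun q : E2 × ℝ => w q.1 q.2 * psiStar η p R q.1 q.2) (Pset S) := by
  refine Integrable.mul_bdd hw (aestronglyMeasurable_psiStar hη hp hR) (c := 1) ?_
  filter_upwards [ae_restrict_mem (measurableSet_Pset S)] with q hq
  rw [norm_of_nonneg (psiStar_nonneg hη hR hq.2.1)]
  exact (psiStar_le_psi hη hp hR hq.2.1).trans (psi_le_one hη hp hR hq.2.1)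

lemma setIntegral_mul_psi_add_setIntegral_mul_psiStar_le (hη : etaOK η) (hp : 1 < p)
    (hR : 0 < R) (hw : IntegrableOn (fun q : E2 × ℝ => w q.1 q.2) (Pset (2 * R)))
    (hw_nonneg : ∀ q ∈ Pset (2 * R), 0 ≤ w q.1 q.2) :
    (∫ q in Pset R, w q.1 q.2 * psi η p R q.1 q.2) +
        ∫ q in Pset (2 * R), w q.1 q.2 * psiStar η p (2 * R) q.1 q.2 ≤
      ∫ q in Pset (2 * R), w q.1 q.2 * psi η p (2 * R) q.1 q.2 := by
  have h2R : 0 < 2 * R := by linarith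
  have hextend : ∫ q in Pset (2 * R), w q.1 q.2 * psi η p R q.1 q.2 =
      ∫ q in Pset R, w q.1 q.2 * psi η p R q.1 q.2 :=
    setIntegral_eq_of_subset_of_forall_sdiff_eq_zero (measurableSet_Pset _)
      (Pset_mono (by linarith)) fun q hq => by
        rw [psi_eq_zero hη hp hR (not_le.mp fun h => hq.2 ⟨hq.1.1, hq.1.2.1, h⟩).le, mul_zero]
  have hψ := integrableOn_mul_psi hη hp hR.le hw
  have hψ' := integrableOn_mul_psiStar hη hp h2R.le hw
  rw [← hextend, ← integral_add hψ hψ']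
  refine setIntegral_mono_on (hψ.add hψ') (integrableOn_mul_psi hη hp h2R.le hw)
    (measurableSet_Pset _) fun q hq => ?_
  rw [← mul_add, add_comm]
  exact mul_le_mul_of_nonneg_left (psiStar_two_mul_add_psi_le hη hp hR hq.2.1) (hw_nonneg q hq)

end Integrals

/-- Key lemma, critical case `θ = 0`, `κ = 1/(p−1)`: under the criterion
`δ + ∬_{P(R)} w ψ_R ≤ C₀ (log R)^{κ/p'} (∬_{P(R)} w ψ*_R)^{1/p}` for all `R ∈ [R₁,T)`,
one gets `T ≤ exp(exp(C δ^{−(p−1)}))`. -/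
theorem statement11 (p C₀ R₁ : ℝ) (hp : 1 < p) (hC₀ : 0 < C₀)
    (hR₁ : 1 < R₁) (η : ℝ → ℝ) (hη : etaOK η) :
    ∃ C > (0 : ℝ), ∃ δ₀ ∈ Set.Ioo (0 : ℝ) 1,
      ∀ δ : ℝ, 0 < δ → δ ≤ δ₀ → ∀ T : ℝ, R₁ < T →
      ∀ w : E2 → ℝ → ℝ,
        Measurable (fun q : E2 × ℝ => w q.1 q.2) →
        (∀ x : E2, ∀ t : ℝ, x ∈ Omega → 0 ≤ t → t < T → 0 ≤ w x t) →
        (∀ R ∈ Set.Ioo (0 : ℝ) T,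
          IntegrableOn (fun q : E2 × ℝ => w q.1 q.2) (Pset R)) →
        (∀ R : ℝ, R₁ ≤ R → R < T →
          δ + ∫ q in Pset R, w q.1 q.2 * psi η p R q.1 q.2
            ≤ C₀ * Real.log R ^ ((1 / (p - 1)) / (p / (p - 1))) *
              (∫ q in Pset R, w q.1 q.2 * psiStar η p R q.1 q.2) ^ (1 / p)) →
        T ≤ Real.exp (Real.exp (C * δ ^ (-(p - 1)))) := by
  have hA : 0 < log 2 + log R₁ := add_pos (log_pos one_lt_two) (log_pos hR₁)
  have hp1 : 0 < p - 1 := sub_pos.mpr hp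
  refine ⟨C₀ ^ p * (log 2 + log R₁) / (p - 1) + (log 2 + log R₁), by positivity, 1 / 2,
    ⟨by norm_num, by norm_num⟩, ?_⟩
  intro δ hδ hδ₀ T _ w _ hw_nonneg hw_int hcrit
  have hwP : ∀ S < T, ∀ q ∈ Pset S, 0 ≤ w q.1 q.2 := fun S hS q hq =>
    hw_nonneg q.1 q.2 hq.1 hq.2.1 (by nlinarith [hq.2.2, sq_nonneg (‖q.1‖ - 1)])
  have hexp : (1 / (p - 1)) / (p / (p - 1)) = 1 / p := by field_simp
  refine le_exp_exp_of_forall_two_pow_mul_lt hR₁ (by positivity)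
    (one_le_rpow_of_pos_of_le_one_of_nonpos hδ (by linarith) (by linarith)) fun N hN => ?_
  rw [neg_sub]
  refine log_succ_lt_of_criterion hp hC₀ hR₁ hδ
    (J := fun R => ∫ q in Pset R, w q.1 q.2 * psi η p R q.1 q.2)
    (I := fun R => ∫ q in Pset R, w q.1 q.2 * psiStar η p R q.1 q.2) ?_ ?_ ?_ ?_ hN
  · exact fun R hR hRT => setIntegral_nonneg (measurableSet_Pset R) fun q hq =>
      mul_nonneg (hwP R hRT q hq) (psi_nonneg hη hR.le hq.2.1)
  · exact fun R hR hRT => setIntegral_nonneg (measurableSet_Pset R) fun q hq =>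
      mul_nonneg (hwP R hRT q hq) (psiStar_nonneg hη hR.le hq.2.1)
  · exact fun R hR h2R => setIntegral_mul_psi_add_setIntegral_mul_psiStar_le hη hp hR
      (hw_int _ ⟨by linarith, h2R⟩) (hwP _ h2R)
  · intro R hR hRT
    simpa only [hexp] using hcrit R hR hRT
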